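/- arXiv:solv-int/9809008 — 2 statements merged into one kernel-verified Lean document; each statement's English description precedes it below -/
import Mathlib

section
/- For the case N = 4 of the hierarchy (the many-particle '(1:12:16)' system), define 𝒰₄ = −(1/8)(Σ_{i=1}^n q_i²)² − (3/2)q_{n+1}²Σ_{i=1}^n q_i² − 2q_{n+1}⁴ + Σ_{i=1}^n A_i q_i²(q_{n+1} − A_i/2) + B(4q_{n+1}³ − 2Bq_{n+1}² + q_{n+1}Σ_{j=1}^n q_j²), the Hamiltonian H₄ = (1/2)Σ_{i=1}^{n+1} p_i² + 𝒰₄, Q₄(z) = z² + 2zq_{n+1} + 3q_{n+1}² + (1/2)Σ_{i=1}^n q_i² − 2Bq_{n+1}, and W₄(z) = 4z³ + 4Bz² + 4z²q_{n+1} + 4zq_{n+1}² + zΣ_{i=1}^n q_i² + 4q_{n+1}³ + 2q_{n+1}Σ_{i=1}^n q_i² − Σ_{i=1}^n A_i q_i² − 4Bq_{n+1}² + Σ_{i=1}^n p_i²/(z+A_i). Then for every z ∈ ℝ \ {−A₁,…,−A_n}: {H₄, U(z)} = −2V(z), {H₄, V(z)} = W₄(z) − U(z)Q₄(z), and {H₄,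 W₄(z)} = 2Q₄(z)V(z). -/
open scoped BigOperators
open Finset Matrix

noncomputable section

/-- Phase space ℝ^{2m}: a point is a pair (q, p). -/
abbrev Phase (m : ℕ) := (Fin m → ℝ) × (Fin m → ℝ)

/-- Partial derivative with respect to `q i`. -/
noncomputable def pdq {m : ℕ} (f : Phase m → ℝ) (i : Fin m) (x : Phase m) : ℝ :=
  deriv (fun t => f (Function.update x.1 i t, x.2)) (x.1 i)

/-- Partial derivative with respect to `p i`. -/
noncomputable def pdp {m : ℕ} (f : Phase m → ℝ) (i : Fin m) (x : Phase m) : ℝ :=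
  deriv (fun t => f (x.1, Function.update x.2 i t)) (x.2 i)

/-- Canonical Poisson bracket {f,g} = Σ_i (∂f/∂p_i ∂g/∂q_i − ∂f/∂q_i ∂g/∂p_i). -/
noncomputable def poisson {m : ℕ} (f g : Phase m → ℝ) (x : Phase m) : ℝ :=
  ∑ i, (pdp f i x * pdq g i x - pdq f i x * pdp g i x)

/-- Partial derivative of a function of q only. -/
noncomputable def pdq' {m : ℕ} (f : (Fin m → ℝ) → ℝ) (i : Fin m) (q : Fin m → ℝ) : ℝ :=
  deriv (fun t => f (Function.update q i t)) (q i)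

/-- U(z) = 4z − 4q_{n+1} + 4B − Σ q_i²/(z+A_i). -/
noncomputable def Ufun (n : ℕ) (A : Fin n → ℝ) (B : ℝ) (z : ℝ) (x : Phase (n+1)) : ℝ :=
  4 * z - 4 * x.1 (Fin.last n) + 4 * B - ∑ i : Fin n, (x.1 i.castSucc) ^ 2 / (z + A i)

/-- V(z) = 2p_{n+1} + Σ p_i q_i/(z+A_i). -/
noncomputable def Vfun (n : ℕ) (A : Fin n → ℝ) (z : ℝ) (x : Phase (n+1)) : ℝ :=
  2 * x.2 (Fin.last n) + ∑ i : Fin n, x.2 i.castSucc * x.1 i.castSucc / (z + A i)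

/-- 𝒰₄ for the '(1:12:16)' system. -/
noncomputable def U4 (n : ℕ) (A : Fin n → ℝ) (B : ℝ) (q : Fin (n+1) → ℝ) : ℝ :=
  -(1/8) * (∑ i : Fin n, (q i.castSucc) ^ 2) ^ 2
    - (3/2) * (q (Fin.last n)) ^ 2 * ∑ i : Fin n, (q i.castSucc) ^ 2
    - 2 * (q (Fin.last n)) ^ 4
    + ∑ i : Fin n, A i * (q i.castSucc) ^ 2 * (q (Fin.last n) - A i / 2)
    + B * (4 * (q (Fin.last n)) ^ 3 - 2 * B * (q (Fin.last n)) ^ 2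
        + q (Fin.last n) * ∑ j : Fin n, (q j.castSucc) ^ 2)

/-- H₄ = (1/2)Σ p_i² + 𝒰₄. -/
noncomputable def H4 (n : ℕ) (A : Fin n → ℝ) (B : ℝ) (x : Phase (n+1)) : ℝ :=
  (1/2) * ∑ i : Fin (n+1), (x.2 i) ^ 2 + U4 n A B x.1

/-- Q₄(z) = z² + 2zq_{n+1} + 3q_{n+1}² + (1/2)Σq_i² − 2Bq_{n+1}. -/
noncomputable def Q4 (n : ℕ) (B : ℝ) (z : ℝ) (x : Phase (n+1)) : ℝ :=
  z ^ 2 + 2 * z * x.1 (Fin.last n) + 3 * (x.1 (Fin.last n)) ^ 2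
    + (1/2) * ∑ i : Fin n, (x.1 i.castSucc) ^ 2 - 2 * B * x.1 (Fin.last n)

/-- W₄(z). -/
noncomputable def W4 (n : ℕ) (A : Fin n → ℝ) (B : ℝ) (z : ℝ) (x : Phase (n+1)) : ℝ :=
  4 * z ^ 3 + 4 * B * z ^ 2 + 4 * z ^ 2 * x.1 (Fin.last n)
    + 4 * z * (x.1 (Fin.last n)) ^ 2 + z * ∑ i : Fin n, (x.1 i.castSucc) ^ 2
    + 4 * (x.1 (Fin.last n)) ^ 3
    + 2 * x.1 (Fin.last n) * ∑ i : Fin n, (x.1 i.castSucc) ^ 2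
    - ∑ i : Fin n, A i * (x.1 i.castSucc) ^ 2 - 4 * B * (x.1 (Fin.last n)) ^ 2
    + ∑ i : Fin n, (x.2 i.castSucc) ^ 2 / (z + A i)

section AuxLemmas

lemma hasDerivAt_id'' (t : ℝ) : HasDerivAt (fun s : ℝ => s) 1 t := hasDerivAt_id' t

variable {n : ℕ}

lemma upd_cast_last (q : Fin (n+1) → ℝ) (i : Fin n) (t : ℝ) :
    Function.update q i.castSucc t (Fin.last n) = q (Fin.last n) :=
  Function.update_of_ne (Fin.castSucc_lt_last i).ne' _ _

lemma upd_cast_cast (q : Fin (n+1) → ℝ) (i j : Fin n) (t : ℝ) :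
    Function.update q i.castSucc t j.castSucc = if j = i then t else q j.castSucc := by
  simp [Function.update_apply, Fin.castSucc_inj]

lemma upd_last_cast (q : Fin (n+1) → ℝ) (j : Fin n) (t : ℝ) :
    Function.update q (Fin.last n) t j.castSucc = q j.castSucc :=
  Function.update_of_ne (Fin.castSucc_lt_last j).ne _ _

lemma upd_last_last (q : Fin (n+1) → ℝ) (t : ℝ) :
    Function.update q (Fin.last n) t (Fin.last n) = t := by simp

lemma ite_self_val (q : Fin (n+1) → ℝ) (i j : Fin n) :
    (if j = i then q i.castSucc else q j.castSucc) = q j.castSucc := by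
  split <;> simp_all

variable (A : Fin n → ℝ) (B z : ℝ)

lemma hasDerivAt_sqsum (i : Fin n) (q : Fin (n+1) → ℝ) :
    HasDerivAt (fun t => ∑ j : Fin n, (if j = i then t else q j.castSucc)^2)
      (2 * q i.castSucc) (q i.castSucc) := by
  have h : HasDerivAt (fun t => ∑ j : Fin n, (if j = i then t else q j.castSucc)^2)
      (∑ j : Fin n, if j = i then 2 * q i.castSucc else 0) (q i.castSucc) := by
    apply HasDerivAt.fun_sum
    intro j _
    by_cases hji : j = i
    · subst hji; simp only [if_pos rfl]
      simpa using hasDerivAt_pow 2 (q j.castSucc)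
    · simp only [if_neg hji]; exact hasDerivAt_const _ _
  simpa using h

lemma hasDerivAt_sqsum_div (i : Fin n) (q : Fin (n+1) → ℝ) :
    HasDerivAt (fun t => ∑ j : Fin n, (if j = i then t else q j.castSucc)^2 / (z + A j))
      (2 * q i.castSucc / (z + A i)) (q i.castSucc) := by
  have h : HasDerivAt (fun t => ∑ j : Fin n, (if j = i then t else q j.castSucc)^2 / (z + A j))
      (∑ j : Fin n, if j = i then 2 * q i.castSucc / (z + A i) else 0) (q i.castSucc) := by
    apply HasDerivAt.fun_sum
    intro j _
    by_cases hji : j = i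
    · subst hji; simp only [if_pos rfl]
      simpa using (hasDerivAt_pow 2 (q j.castSucc)).div_const (z + A j)
    · simp only [if_neg hji]; exact hasDerivAt_const _ _
  simpa using h

lemma hasDerivAt_Asqsum (i : Fin n) (q : Fin (n+1) → ℝ) :
    HasDerivAt (fun t => ∑ j : Fin n, A j * (if j = i then t else q j.castSucc)^2)
      (A i * (2 * q i.castSucc)) (q i.castSucc) := by
  have h : HasDerivAt (fun t => ∑ j : Fin n, A j * (if j = i then t else q j.castSucc)^2)
      (∑ j : Fin n, if j = i then A i * (2 * q i.castSucc) else 0) (q i.castSucc) := by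
    apply HasDerivAt.fun_sum
    intro j _
    by_cases hji : j = i
    · subst hji; simp only [if_pos rfl]
      simpa using (hasDerivAt_pow 2 (q j.castSucc)).const_mul (A j)
    · simp only [if_neg hji]; exact hasDerivAt_const _ _
  simpa using h

lemma hasDerivAt_Asqsum_aff (i : Fin n) (q : Fin (n+1) → ℝ) (Q : ℝ) :
    HasDerivAt (fun t => ∑ j : Fin n, A j * (if j = i then t else q j.castSucc)^2 * (Q - A j / 2))
      (A i * (2 * q i.castSucc) * (Q - A i / 2)) (q i.castSucc) := by
  have h : HasDerivAt
      (fun t => ∑ j : Fin n, A j * (if j = i then t else q j.castSucc)^2 * (Q - A j / 2))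
      (∑ j : Fin n, if j = i then A i * (2 * q i.castSucc) * (Q - A i / 2) else 0)
      (q i.castSucc) := by
    apply HasDerivAt.fun_sum
    intro j _
    by_cases hji : j = i
    · subst hji; simp only [if_pos rfl]
      simpa using ((hasDerivAt_pow 2 (q j.castSucc)).const_mul (A j)).mul_const (Q - A j / 2)
    · simp only [if_neg hji]; exact hasDerivAt_const _ _
  simpa using h

lemma hasDerivAt_pV (i : Fin n) (p q : Fin (n+1) → ℝ) :
    HasDerivAt (fun t => ∑ j : Fin n, p j.castSucc * (if j = i then t else q j.castSucc) / (z + A j))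
      (p i.castSucc / (z + A i)) (q i.castSucc) := by
  have h : HasDerivAt
      (fun t => ∑ j : Fin n, p j.castSucc * (if j = i then t else q j.castSucc) / (z + A j))
      (∑ j : Fin n, if j = i then p i.castSucc / (z + A i) else 0) (q i.castSucc) := by
    apply HasDerivAt.fun_sum
    intro j _
    by_cases hji : j = i
    · subst hji; simp only [if_pos rfl]
      simpa using ((hasDerivAt_id'' (q j.castSucc)).const_mul (p j.castSucc)).div_const (z + A j)
    · simp only [if_neg hji]; exact hasDerivAt_const _ _
  simpa using h

lemma hasDerivAt_Vp (i : Fin n) (p q : Fin (n+1) → ℝ) :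
    HasDerivAt (fun t => ∑ j : Fin n, (if j = i then t else p j.castSucc) * q j.castSucc / (z + A j))
      (q i.castSucc / (z + A i)) (p i.castSucc) := by
  have h : HasDerivAt
      (fun t => ∑ j : Fin n, (if j = i then t else p j.castSucc) * q j.castSucc / (z + A j))
      (∑ j : Fin n, if j = i then q i.castSucc / (z + A i) else 0) (p i.castSucc) := by
    apply HasDerivAt.fun_sum
    intro j _
    by_cases hji : j = i
    · subst hji; simp only [if_pos rfl]
      simpa using ((hasDerivAt_id'' (p j.castSucc)).mul_const (q j.castSucc)).div_const (z + A j)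
    · simp only [if_neg hji]; exact hasDerivAt_const _ _
  simpa using h

variable (x : Phase (n+1))

lemma pdp_H4 (i : Fin (n+1)) : pdp (H4 n A B) i x = x.2 i := by
  have H : HasDerivAt (fun t => H4 n A B (x.1, Function.update x.2 i t))
      (1/2 * (∑ k : Fin (n+1), if k = i then 2 * x.2 i else 0)) (x.2 i) := by
    simp only [H4, Function.update_apply]
    apply HasDerivAt.add_const
    apply HasDerivAt.const_mul
    apply HasDerivAt.fun_sum
    intro k _
    by_cases hk : k = i
    · subst hk; simp only [if_pos rfl]
      simpa using hasDerivAt_pow 2 (x.2 k)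
    · simp only [if_neg hk]; exact hasDerivAt_const _ _
  rw [pdp, H.deriv]
  simp

end AuxLemmas
section PDLemmas


variable {n : ℕ} (A : Fin n → ℝ) (B z : ℝ) (x : Phase (n+1))

lemma pdq_H4_cast (i : Fin n) : pdq (H4 n A B) i.castSucc x =
    x.1 i.castSucc * (-(1/2) * (∑ j : Fin n, (x.1 j.castSucc)^2)
      - 3 * (x.1 (Fin.last n))^2 + 2 * A i * x.1 (Fin.last n) - (A i)^2
      + 2 * B * x.1 (Fin.last n)) := by
  have HS := hasDerivAt_sqsum i x.1
  have Hd := hasDerivAt_Asqsum_aff A i x.1 (x.1 (Fin.last n))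
  have H := ((((((HS.pow 2).const_mul (-(1/8))).sub
      (HS.const_mul (3/2 * (x.1 (Fin.last n))^2))).sub_const
      (2 * (x.1 (Fin.last n))^4)).add Hd).add
      (((HS.const_mul (x.1 (Fin.last n))).const_add
        (4 * (x.1 (Fin.last n))^3 - 2*B*(x.1 (Fin.last n))^2)).const_mul B)).const_add
      (1/2 * ∑ k : Fin (n+1), (x.2 k)^2)
  have H2 : HasDerivAt (fun t => H4 n A B (Function.update x.1 i.castSucc t, x.2)) _
      (x.1 i.castSucc) :=
    H.congr_of_eventuallyEq (Filter.Eventually.of_forall fun t => by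
      simp only [H4, U4, upd_cast_cast, upd_cast_last, Pi.add_apply, Pi.sub_apply, Pi.pow_apply])
  rw [pdq, H2.deriv]
  simp only [ite_self_val]
  ring

lemma pdq_H4_last : pdq (H4 n A B) (Fin.last n) x =
    -3 * x.1 (Fin.last n) * (∑ j : Fin n, (x.1 j.castSucc)^2) - 8 * (x.1 (Fin.last n))^3
      + (∑ j : Fin n, A j * (x.1 j.castSucc)^2) + 12 * B * (x.1 (Fin.last n))^2
      - 4 * B^2 * x.1 (Fin.last n) + B * (∑ j : Fin n, (x.1 j.castSucc)^2) := by
  have HL : HasDerivAt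
      (fun t => ∑ j : Fin n, A j * (x.1 j.castSucc)^2 * (t - A j / 2))
      (∑ j : Fin n, A j * (x.1 j.castSucc)^2 * 1) (x.1 (Fin.last n)) :=
    HasDerivAt.fun_sum fun j _ =>
      ((hasDerivAt_id'' (x.1 (Fin.last n))).sub_const (A j / 2)).const_mul
        (A j * (x.1 j.castSucc)^2)
  have H := (((((((hasDerivAt_pow 2 (x.1 (Fin.last n))).const_mul
      (3/2)).mul_const (∑ j : Fin n, (x.1 j.castSucc)^2)).const_sub
      (-(1/8) * (∑ j : Fin n, (x.1 j.castSucc)^2)^2)).sub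
      ((hasDerivAt_pow 4 (x.1 (Fin.last n))).const_mul 2)).add HL).add
      (((((hasDerivAt_pow 3 (x.1 (Fin.last n))).const_mul 4).sub
        ((hasDerivAt_pow 2 (x.1 (Fin.last n))).const_mul (2*B))).add
        ((hasDerivAt_id'' (x.1 (Fin.last n))).mul_const
          (∑ j : Fin n, (x.1 j.castSucc)^2))).const_mul B)).const_add
      (1/2 * ∑ k : Fin (n+1), (x.2 k)^2)
  have H2 : HasDerivAt (fun t => H4 n A B (Function.update x.1 (Fin.last n) t, x.2)) _
      (x.1 (Fin.last n)) :=
    H.congr_of_eventuallyEq (Filter.Eventually.of_forall fun t => by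
      simp only [H4, U4, upd_last_cast, upd_last_last, Pi.add_apply, Pi.sub_apply])
  rw [pdq, H2.deriv]
  ring

lemma pdp_U (i : Fin (n+1)) : pdp (Ufun n A B z) i x = 0 := by
  simp only [pdp, Ufun]
  exact deriv_const _ _

lemma pdq_U_cast (i : Fin n) :
    pdq (Ufun n A B z) i.castSucc x = -(2 * x.1 i.castSucc / (z + A i)) := by
  have H := (hasDerivAt_sqsum_div A z i x.1).const_sub
      (4 * z - 4 * x.1 (Fin.last n) + 4 * B)
  have H2 : HasDerivAt (fun t => Ufun n A B z (Function.update x.1 i.castSucc t, x.2)) _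
      (x.1 i.castSucc) :=
    H.congr_of_eventuallyEq (Filter.Eventually.of_forall fun t => by
      simp only [Ufun, upd_cast_cast, upd_cast_last])
  rw [pdq, H2.deriv]

lemma pdq_U_last : pdq (Ufun n A B z) (Fin.last n) x = -4 := by
  have H := ((((hasDerivAt_id'' (x.1 (Fin.last n))).const_mul 4).const_sub (4*z)).add_const
      (4*B)).sub_const (∑ j : Fin n, (x.1 j.castSucc)^2 / (z + A j))
  have H2 : HasDerivAt (fun t => Ufun n A B z (Function.update x.1 (Fin.last n) t, x.2)) _
      (x.1 (Fin.last n)) :=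
    H.congr_of_eventuallyEq (Filter.Eventually.of_forall fun t => by
      simp only [Ufun, upd_last_cast, upd_last_last])
  rw [pdq, H2.deriv]
  ring

lemma pdq_V_cast (i : Fin n) :
    pdq (Vfun n A z) i.castSucc x = x.2 i.castSucc / (z + A i) := by
  have H := (hasDerivAt_pV A z i x.2 x.1).const_add (2 * x.2 (Fin.last n))
  have H2 : HasDerivAt (fun t => Vfun n A z (Function.update x.1 i.castSucc t, x.2)) _
      (x.1 i.castSucc) :=
    H.congr_of_eventuallyEq (Filter.Eventually.of_forall fun t => by
      simp only [Vfun, upd_cast_cast, upd_cast_last])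
  rw [pdq, H2.deriv]

lemma pdq_V_last : pdq (Vfun n A z) (Fin.last n) x = 0 := by
  simp only [pdq, Vfun, upd_last_cast]
  exact deriv_const _ _

lemma pdp_V_cast (i : Fin n) :
    pdp (Vfun n A z) i.castSucc x = x.1 i.castSucc / (z + A i) := by
  have H := (hasDerivAt_Vp A z i x.2 x.1).const_add (2 * x.2 (Fin.last n))
  have H2 : HasDerivAt (fun t => Vfun n A z (x.1, Function.update x.2 i.castSucc t)) _
      (x.2 i.castSucc) :=
    H.congr_of_eventuallyEq (Filter.Eventually.of_forall fun t => by
      simp only [Vfun, upd_cast_cast, upd_cast_last])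
  rw [pdp, H2.deriv]

lemma pdp_V_last : pdp (Vfun n A z) (Fin.last n) x = 2 := by
  have H := ((hasDerivAt_id'' (x.2 (Fin.last n))).const_mul 2).add_const
      (∑ j : Fin n, x.2 j.castSucc * x.1 j.castSucc / (z + A j))
  have H2 : HasDerivAt (fun t => Vfun n A z (x.1, Function.update x.2 (Fin.last n) t)) _
      (x.2 (Fin.last n)) :=
    H.congr_of_eventuallyEq (Filter.Eventually.of_forall fun t => by
      simp only [Vfun, upd_last_cast, upd_last_last])
  rw [pdp, H2.deriv]
  ring

lemma pdq_W_cast (i : Fin n) : pdq (W4 n A B z) i.castSucc x =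
    2 * z * x.1 i.castSucc + 4 * x.1 (Fin.last n) * x.1 i.castSucc
      - 2 * A i * x.1 i.castSucc := by
  have HS := hasDerivAt_sqsum i x.1
  have HAS := hasDerivAt_Asqsum A i x.1
  have H := ((((((HS.const_mul z).const_add
      (4 * z^3 + 4 * B * z^2 + 4 * z^2 * x.1 (Fin.last n)
        + 4 * z * (x.1 (Fin.last n))^2)).add_const
      (4 * (x.1 (Fin.last n))^3)).add
      (HS.const_mul (2 * x.1 (Fin.last n)))).sub HAS).sub_const
      (4 * B * (x.1 (Fin.last n))^2)).add_const
      (∑ j : Fin n, (x.2 j.castSucc)^2 / (z + A j))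
  have H2 : HasDerivAt (fun t => W4 n A B z (Function.update x.1 i.castSucc t, x.2)) _
      (x.1 i.castSucc) :=
    H.congr_of_eventuallyEq (Filter.Eventually.of_forall fun t => by
      simp only [W4, upd_cast_cast, upd_cast_last, Pi.add_apply, Pi.sub_apply])
  rw [pdq, H2.deriv]
  ring

lemma pdq_W_last : pdq (W4 n A B z) (Fin.last n) x =
    4 * z^2 + 8 * z * x.1 (Fin.last n) + 12 * (x.1 (Fin.last n))^2
      + 2 * (∑ j : Fin n, (x.1 j.castSucc)^2) - 8 * B * x.1 (Fin.last n) := by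
  have T1 := ((hasDerivAt_id'' (x.1 (Fin.last n))).const_mul (4 * z^2)).const_add
      (4 * z^3 + 4 * B * z^2)
  have T2 := T1.add ((hasDerivAt_pow 2 (x.1 (Fin.last n))).const_mul (4*z))
  have T3 := T2.add_const (z * ∑ j : Fin n, (x.1 j.castSucc)^2)
  have T4 := T3.add ((hasDerivAt_pow 3 (x.1 (Fin.last n))).const_mul 4)
  have T5 := T4.add (((hasDerivAt_id'' (x.1 (Fin.last n))).const_mul 2).mul_const
      (∑ j : Fin n, (x.1 j.castSucc)^2))
  have T6 := T5.sub_const (∑ j : Fin n, A j * (x.1 j.castSucc)^2)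
  have T7 := T6.sub ((hasDerivAt_pow 2 (x.1 (Fin.last n))).const_mul (4*B))
  have H := T7.add_const (∑ j : Fin n, (x.2 j.castSucc)^2 / (z + A j))
  have H2 : HasDerivAt (fun t => W4 n A B z (Function.update x.1 (Fin.last n) t, x.2)) _
      (x.1 (Fin.last n)) :=
    H.congr_of_eventuallyEq (Filter.Eventually.of_forall fun t => by
      simp only [W4, upd_last_cast, upd_last_last, Pi.add_apply, Pi.sub_apply])
  rw [pdq, H2.deriv]
  ring

lemma pdp_W_cast (i : Fin n) :
    pdp (W4 n A B z) i.castSucc x = 2 * x.2 i.castSucc / (z + A i) := by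
  have H := (hasDerivAt_sqsum_div A z i x.2).const_add
      (4 * z^3 + 4 * B * z^2 + 4 * z^2 * x.1 (Fin.last n)
        + 4 * z * (x.1 (Fin.last n))^2 + z * ∑ j : Fin n, (x.1 j.castSucc)^2
        + 4 * (x.1 (Fin.last n))^3
        + 2 * x.1 (Fin.last n) * ∑ j : Fin n, (x.1 j.castSucc)^2
        - ∑ j : Fin n, A j * (x.1 j.castSucc)^2 - 4 * B * (x.1 (Fin.last n))^2)
  have H2 : HasDerivAt (fun t => W4 n A B z (x.1, Function.update x.2 i.castSucc t)) _
      (x.2 i.castSucc) :=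
    H.congr_of_eventuallyEq (Filter.Eventually.of_forall fun t => by
      simp only [W4, upd_cast_cast, upd_cast_last])
  rw [pdp, H2.deriv]

lemma pdp_W_last : pdp (W4 n A B z) (Fin.last n) x = 0 := by
  simp only [pdp, W4, upd_last_cast]
  exact deriv_const _ _

end PDLemmas
section Brackets
variable {n : ℕ} (A : Fin n → ℝ) (B z : ℝ) (x : Phase (n+1))

lemma hA1 (hz : ∀ j, z + A j ≠ 0) :
    ∑ j : Fin n, A j * ((x.1 j.castSucc)^2 / (z + A j))
      = (∑ j : Fin n, (x.1 j.castSucc)^2)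
        - z * ∑ j : Fin n, (x.1 j.castSucc)^2 / (z + A j) := by
  rw [Finset.sum_congr rfl (fun j _ => (by
      field_simp [hz j]; ring : A j * ((x.1 j.castSucc)^2 / (z + A j))
        = (x.1 j.castSucc)^2 - z * ((x.1 j.castSucc)^2 / (z + A j))))]
  rw [Finset.sum_sub_distrib, ← Finset.mul_sum]

lemma hA2 (hz : ∀ j, z + A j ≠ 0) :
    ∑ j : Fin n, A j ^ 2 * ((x.1 j.castSucc)^2 / (z + A j))
      = (∑ j : Fin n, A j * (x.1 j.castSucc)^2)
        - z * (∑ j : Fin n, (x.1 j.castSucc)^2)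
        + z^2 * ∑ j : Fin n, (x.1 j.castSucc)^2 / (z + A j) := by
  rw [Finset.sum_congr rfl (fun j _ => (by
      field_simp [hz j]; ring : A j ^ 2 * ((x.1 j.castSucc)^2 / (z + A j))
        = A j * (x.1 j.castSucc)^2 - z * (x.1 j.castSucc)^2
          + z^2 * ((x.1 j.castSucc)^2 / (z + A j))))]
  rw [Finset.sum_add_distrib, Finset.sum_sub_distrib, ← Finset.mul_sum, ← Finset.mul_sum]

lemma hA3 (hz : ∀ j, z + A j ≠ 0) :
    ∑ j : Fin n, A j * (x.2 j.castSucc * x.1 j.castSucc / (z + A j))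
      = (∑ j : Fin n, x.2 j.castSucc * x.1 j.castSucc)
        - z * ∑ j : Fin n, x.2 j.castSucc * x.1 j.castSucc / (z + A j) := by
  rw [Finset.sum_congr rfl (fun j _ => (by
      field_simp [hz j]; ring : A j * (x.2 j.castSucc * x.1 j.castSucc / (z + A j))
        = x.2 j.castSucc * x.1 j.castSucc
          - z * (x.2 j.castSucc * x.1 j.castSucc / (z + A j))))]
  rw [Finset.sum_sub_distrib, ← Finset.mul_sum]

lemma hA4 (hz : ∀ j, z + A j ≠ 0) :
    ∑ j : Fin n, A j ^ 2 * (x.2 j.castSucc * x.1 j.castSucc / (z + A j))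
      = (∑ j : Fin n, A j * (x.2 j.castSucc * x.1 j.castSucc))
        - z * (∑ j : Fin n, x.2 j.castSucc * x.1 j.castSucc)
        + z^2 * ∑ j : Fin n, x.2 j.castSucc * x.1 j.castSucc / (z + A j) := by
  rw [Finset.sum_congr rfl (fun j _ => (by
      field_simp [hz j]; ring : A j ^ 2 * (x.2 j.castSucc * x.1 j.castSucc / (z + A j))
        = A j * (x.2 j.castSucc * x.1 j.castSucc)
          - z * (x.2 j.castSucc * x.1 j.castSucc)
          + z^2 * (x.2 j.castSucc * x.1 j.castSucc / (z + A j))))]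
  rw [Finset.sum_add_distrib, Finset.sum_sub_distrib, ← Finset.mul_sum, ← Finset.mul_sum]

lemma bracket1 : poisson (H4 n A B) (Ufun n A B z) x = -2 * Vfun n A z x := by
  unfold poisson
  rw [Fin.sum_univ_castSucc]
  simp only [pdp_H4, pdq_U_cast, pdq_U_last, pdp_U, mul_zero, sub_zero]
  rw [Finset.sum_congr rfl (fun j (_ : j ∈ Finset.univ) => (by ring :
      x.2 j.castSucc * -(2 * x.1 j.castSucc / (z + A j))
        = -2 * (x.2 j.castSucc * x.1 j.castSucc / (z + A j))))]
  rw [← Finset.mul_sum, Vfun]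
  ring

lemma bracket2 (hz : ∀ j, z + A j ≠ 0) : poisson (H4 n A B) (Vfun n A z) x
    = W4 n A B z x - Ufun n A B z x * Q4 n B z x := by
  unfold poisson
  rw [Fin.sum_univ_castSucc]
  simp only [pdp_H4, pdq_V_cast, pdq_V_last, pdp_V_cast, pdp_V_last,
    pdq_H4_cast, pdq_H4_last, mul_zero, zero_sub]
  rw [Finset.sum_congr rfl (fun j (_ : j ∈ Finset.univ) => (by ring :
      x.2 j.castSucc * (x.2 j.castSucc / (z + A j)) -
          x.1 j.castSucc *
              (-(1 / 2) * ∑ k : Fin n, x.1 k.castSucc ^ 2 - 3 * x.1 (Fin.last n) ^ 2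
                  + 2 * A j * x.1 (Fin.last n) - A j ^ 2
                + 2 * B * x.1 (Fin.last n)) *
            (x.1 j.castSucc / (z + A j))
        = x.2 j.castSucc ^ 2 / (z + A j)
          + ((1/2) * (∑ k : Fin n, x.1 k.castSucc ^ 2) + 3 * x.1 (Fin.last n) ^ 2
              - 2 * B * x.1 (Fin.last n)) * (x.1 j.castSucc ^ 2 / (z + A j))
          - 2 * x.1 (Fin.last n) * (A j * (x.1 j.castSucc ^ 2 / (z + A j)))
          + A j ^ 2 * (x.1 j.castSucc ^ 2 / (z + A j))))]
  simp only [Finset.sum_add_distrib, Finset.sum_sub_distrib]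
  rw [← Finset.mul_sum, ← Finset.mul_sum, hA1 A z x hz, hA2 A z x hz, W4, Ufun, Q4]
  ring

lemma bracket3 (hz : ∀ j, z + A j ≠ 0) :
    poisson (H4 n A B) (W4 n A B z) x = 2 * Q4 n B z x * Vfun n A z x := by
  unfold poisson
  rw [Fin.sum_univ_castSucc]
  simp only [pdp_H4, pdq_W_cast, pdq_W_last, pdp_W_cast, pdp_W_last,
    pdq_H4_cast, pdq_H4_last, mul_zero, sub_zero]
  rw [Finset.sum_congr rfl (fun j (_ : j ∈ Finset.univ) => (by ring :
      x.2 j.castSucc *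
            (2 * z * x.1 j.castSucc + 4 * x.1 (Fin.last n) * x.1 j.castSucc
              - 2 * A j * x.1 j.castSucc) -
          x.1 j.castSucc *
              (-(1 / 2) * ∑ k : Fin n, x.1 k.castSucc ^ 2 - 3 * x.1 (Fin.last n) ^ 2
                  + 2 * A j * x.1 (Fin.last n) - A j ^ 2
                + 2 * B * x.1 (Fin.last n)) *
            (2 * x.2 j.castSucc / (z + A j))
        = 2 * z * (x.2 j.castSucc * x.1 j.castSucc)
          + 4 * x.1 (Fin.last n) * (x.2 j.castSucc * x.1 j.castSucc)
          - 2 * (A j * (x.2 j.castSucc * x.1 j.castSucc))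
          + ((∑ k : Fin n, x.1 k.castSucc ^ 2) + 6 * x.1 (Fin.last n) ^ 2
              - 4 * B * x.1 (Fin.last n))
            * (x.2 j.castSucc * x.1 j.castSucc / (z + A j))
          - 4 * x.1 (Fin.last n) * (A j * (x.2 j.castSucc * x.1 j.castSucc / (z + A j)))
          + 2 * (A j ^ 2 * (x.2 j.castSucc * x.1 j.castSucc / (z + A j)))))]
  simp only [Finset.sum_add_distrib, Finset.sum_sub_distrib]
  rw [← Finset.mul_sum, ← Finset.mul_sum, ← Finset.mul_sum, ← Finset.mul_sum,
    ← Finset.mul_sum, ← Finset.mul_sum, hA3 A z x hz, hA4 A z x hz, Q4, Vfun]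
  ring

end Brackets

/-- Lax equation for the N = 4 member of the hierarchy. -/
theorem lax_equation_N4
    (n : ℕ) (hn : 1 ≤ n) (A : Fin n → ℝ) (B : ℝ) :
    ∀ z : ℝ, (∀ i : Fin n, z ≠ -A i) → ∀ x : Phase (n+1),
      poisson (H4 n A B) (Ufun n A B z) x = -2 * Vfun n A z x ∧
      poisson (H4 n A B) (Vfun n A z) x = W4 n A B z x - Ufun n A B z x * Q4 n B z x ∧
      poisson (H4 n A B) (W4 n A B z) x = 2 * Q4 n B z x * Vfun n A z x := by
  intro z hzz x
  have hz : ∀ j : Fin n, z + A j ≠ 0 := fun j h0 => hzz j (by linarith)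
  exact ⟨bracket1 A B z x, bracket2 A B z x hz, bracket3 A B z x hz⟩
end
end

section
/- Under the stated recurrence hypotheses, for all x ≠ y in ℝ \ {−A₁,…,−A_n}: {W_N(x), W_N(y)} = 4α_N(x,y)·(V(x) − V(y)). -/
open scoped BigOperators
open Finset Matrix

noncomputable section

/-- Q_N(z) = z^{N−2} − (1/2) Σ_{k=0}^{N−3} (∂𝒰_{N−k−1}/∂q_{n+1}) z^k. -/
noncomputable def Qfun (n N : ℕ) (𝒰 : ℕ → (Fin (n+1) → ℝ) → ℝ) (z : ℝ)
    (x : Phase (n+1)) : ℝ :=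
  z ^ (N-2) - (1/2) * ∑ k ∈ Finset.range (N-2), pdq' (𝒰 (N-k-1)) (Fin.last n) x.1 * z ^ k

/-- W_N(z) = 4z^{N−1} − 2 Σ_{k=0}^{N−2} 𝒰_{N−k−1} z^k + Σ p_i²/(z+A_i). -/
noncomputable def Wfun (n N : ℕ) (A : Fin n → ℝ) (𝒰 : ℕ → (Fin (n+1) → ℝ) → ℝ) (z : ℝ)
    (x : Phase (n+1)) : ℝ :=
  4 * z ^ (N-1) - 2 * ∑ k ∈ Finset.range (N-1), 𝒰 (N-k-1) x.1 * z ^ k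
    + ∑ i : Fin n, (x.2 i.castSucc) ^ 2 / (z + A i)

/-- α_N(x,y) = (Q_N(x) − Q_N(y))/(x − y). -/
noncomputable def alphaFun (n N : ℕ) (𝒰 : ℕ → (Fin (n+1) → ℝ) → ℝ) (z w : ℝ)
    (x : Phase (n+1)) : ℝ :=
  (Qfun n N 𝒰 z x - Qfun n N 𝒰 w x) / (z - w)

/-- The hierarchy recurrence hypotheses on the potentials 𝒰₀,…,𝒰_M. -/
def Recur (n M : ℕ) (A : Fin n → ℝ) (B : ℝ) (𝒰 : ℕ → (Fin (n+1) → ℝ) → ℝ) : Prop :=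
  (∀ m ≤ M, ContDiff ℝ (⊤ : ℕ∞) (𝒰 m)) ∧
  (∀ q, 𝒰 0 q = 0) ∧
  (∀ q : Fin (n+1) → ℝ, 𝒰 1 q = -2 * q (Fin.last n) - 2 * B) ∧
  (∀ q : Fin (n+1) → ℝ,
      𝒰 2 q = -2 * (q (Fin.last n)) ^ 2 - (1/2) * ∑ i : Fin n, (q i.castSucc) ^ 2) ∧
  (∀ m, 2 ≤ m → m ≤ M → ∀ q : Fin (n+1) → ℝ,
    (∀ i : Fin n, pdq' (𝒰 m) i.castSucc q
        = (1/2) * q i.castSucc * pdq' (𝒰 (m-1)) (Fin.last n) q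
          - A i * pdq' (𝒰 (m-1)) i.castSucc q) ∧
    pdq' (𝒰 m) (Fin.last n) q
        = 𝒰 (m-1) q + (1/2) * ∑ i : Fin n, q i.castSucc * pdq' (𝒰 (m-1)) i.castSucc q
          + (q (Fin.last n) - B) * pdq' (𝒰 (m-1)) (Fin.last n) q)

/-- The Hamiltonian H_N = (1/2) Σ p_i² + 𝒰_N. -/
noncomputable def Hfun (n N : ℕ) (𝒰 : ℕ → (Fin (n+1) → ℝ) → ℝ) (x : Phase (n+1)) : ℝ :=
  (1/2) * ∑ i : Fin (n+1), (x.2 i) ^ 2 + 𝒰 N x.1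

lemma diff_update {m : ℕ} (q : Fin m → ℝ) (j : Fin m) :
    Differentiable ℝ (fun t : ℝ => Function.update q j t) := by
  apply differentiable_pi.mpr
  intro i
  simp only [Function.update_apply]
  by_cases h : i = j
  · simp [h]
  · simp [h]

lemma hasDerivAt_pdq' {m : ℕ} {f : (Fin m → ℝ) → ℝ} (hf : ContDiff ℝ (⊤ : ℕ∞) f)
    (q : Fin m → ℝ) (j : Fin m) :
    HasDerivAt (fun t => f (Function.update q j t)) (pdq' f j q) (q j) := by
  have h : Differentiable ℝ (fun t => f (Function.update q j t)) :=
    (hf.differentiable (by simp)).comp (diff_update q j)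
  exact (h (q j)).hasDerivAt

lemma pdq_Wfun (n N : ℕ) (A : Fin n → ℝ) (𝒰 : ℕ → (Fin (n+1) → ℝ) → ℝ)
    (hsm : ∀ k ∈ Finset.range (N-1), ContDiff ℝ (⊤ : ℕ∞) (𝒰 (N-k-1)))
    (z : ℝ) (j : Fin (n+1)) (pt : Phase (n+1)) :
    pdq (Wfun n N A 𝒰 z) j pt
      = -2 * ∑ k ∈ Finset.range (N-1), pdq' (𝒰 (N-k-1)) j pt.1 * z ^ k := by
  have hsum : HasDerivAt
      (fun t => ∑ k ∈ Finset.range (N-1), 𝒰 (N-k-1) (Function.update pt.1 j t) * z ^ k)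
      (∑ k ∈ Finset.range (N-1), pdq' (𝒰 (N-k-1)) j pt.1 * z ^ k) (pt.1 j) :=
    HasDerivAt.fun_sum fun k hk => (hasDerivAt_pdq' (hsm k hk) pt.1 j).mul_const _
  have h := (((hasDerivAt_const (pt.1 j) (4 * z ^ (N-1))).sub
      (hsum.const_mul 2)).add_const (∑ i : Fin n, (pt.2 i.castSucc) ^ 2 / (z + A i)))
  have h' : HasDerivAt (fun t => Wfun n N A 𝒰 z (Function.update pt.1 j t, pt.2))
      (-2 * ∑ k ∈ Finset.range (N-1), pdq' (𝒰 (N-k-1)) j pt.1 * z ^ k) (pt.1 j) := by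
    refine HasDerivAt.congr_deriv h ?_
    ring
  exact h'.deriv

lemma pdp_Wfun_last (n N : ℕ) (A : Fin n → ℝ) (𝒰 : ℕ → (Fin (n+1) → ℝ) → ℝ)
    (z : ℝ) (pt : Phase (n+1)) :
    pdp (Wfun n N A 𝒰 z) (Fin.last n) pt = 0 := by
  have hc : ∀ t : ℝ, Wfun n N A 𝒰 z (pt.1, Function.update pt.2 (Fin.last n) t)
      = Wfun n N A 𝒰 z pt := by
    intro t
    simp [Wfun, Function.update_of_ne (Fin.castSucc_lt_last _).ne]
  simp only [pdp, hc]
  exact deriv_const _ _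

lemma pdp_Wfun_cast (n N : ℕ) (A : Fin n → ℝ) (𝒰 : ℕ → (Fin (n+1) → ℝ) → ℝ)
    (z : ℝ) (i0 : Fin n) (pt : Phase (n+1)) :
    pdp (Wfun n N A 𝒰 z) i0.castSucc pt = 2 * pt.2 i0.castSucc / (z + A i0) := by
  have hs : HasDerivAt
      (fun t : ℝ => ∑ i : Fin n, (Function.update pt.2 i0.castSucc t i.castSucc) ^ 2 / (z + A i))
      (∑ i : Fin n, if i = i0 then 2 * pt.2 i0.castSucc / (z + A i) else 0)
      (pt.2 i0.castSucc) := by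
    apply HasDerivAt.fun_sum
    intro i _
    by_cases h : i = i0
    · subst h
      have hfun : (fun t : ℝ => (Function.update pt.2 i.castSucc t i.castSucc) ^ 2 / (z + A i))
          = fun t => t ^ 2 / (z + A i) := by
        funext t; simp
      rw [hfun, if_pos rfl]
      simpa using (hasDerivAt_pow 2 (pt.2 i.castSucc)).div_const (z + A i)
    · have hfun : (fun t : ℝ => (Function.update pt.2 i0.castSucc t i.castSucc) ^ 2 / (z + A i))
          = fun _ => (pt.2 i.castSucc) ^ 2 / (z + A i) := by
        funext t
        rw [Function.update_of_ne (by simpa [Fin.castSucc_inj] using h)]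
      rw [hfun, if_neg h]
      exact hasDerivAt_const _ _
  have h := (hasDerivAt_const (pt.2 i0.castSucc)
      (4 * z ^ (N-1) - 2 * ∑ k ∈ Finset.range (N-1), 𝒰 (N-k-1) pt.1 * z ^ k)).add hs
  have h' : HasDerivAt (fun t => Wfun n N A 𝒰 z (pt.1, Function.update pt.2 i0.castSucc t))
      (2 * pt.2 i0.castSucc / (z + A i0)) (pt.2 i0.castSucc) := by
    refine HasDerivAt.congr_deriv h ?_
    rw [Finset.sum_ite_eq' Finset.univ i0]
    simp
  exact h'.deriv

lemma pdq'_U1_cast (n : ℕ) (B : ℝ) (𝒰 : ℕ → (Fin (n+1) → ℝ) → ℝ)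
    (h1 : ∀ q : Fin (n+1) → ℝ, 𝒰 1 q = -2 * q (Fin.last n) - 2 * B)
    (i : Fin n) (q : Fin (n+1) → ℝ) : pdq' (𝒰 1) i.castSucc q = 0 := by
  have hc : ∀ t : ℝ, 𝒰 1 (Function.update q i.castSucc t) = 𝒰 1 q := by
    intro t
    rw [h1, h1, Function.update_of_ne (Fin.castSucc_lt_last _).ne']
  simp only [pdq', hc]
  exact deriv_const _ _

lemma pdq'_U1_last (n : ℕ) (B : ℝ) (𝒰 : ℕ → (Fin (n+1) → ℝ) → ℝ)
    (h1 : ∀ q : Fin (n+1) → ℝ, 𝒰 1 q = -2 * q (Fin.last n) - 2 * B)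
    (q : Fin (n+1) → ℝ) : pdq' (𝒰 1) (Fin.last n) q = -2 := by
  have hc : (fun t : ℝ => 𝒰 1 (Function.update q (Fin.last n) t))
      = fun t => -2 * t - 2 * B := by
    funext t; rw [h1]; simp
  simp only [pdq', hc]
  have h : HasDerivAt (fun t : ℝ => -2 * t - 2 * B) (-2) (q (Fin.last n)) := by
    simpa using ((hasDerivAt_id (q (Fin.last n))).const_mul (-2)).sub_const (2 * B)
  exact h.deriv

lemma key_poly (A q : ℝ) : ∀ (M : ℕ) (a b : ℕ → ℝ),
    (∀ k < M, a k + A * a (k+1) = (1/2) * q * b (k+1)) →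
    a M = 0 → b M = -2 → ∀ z : ℝ,
    (z + A) * (∑ k ∈ Finset.range (M+1), a k * z ^ k)
      + q * (z ^ M - (1/2) * ∑ k ∈ Finset.range M, b k * z ^ k)
    = A * a 0 - (1/2) * q * b 0 := by
  intro M
  induction M with
  | zero =>
    intro a b _ ha hb z
    simp [ha, hb]
    ring
  | succ M ih =>
    intro a b hr ha hb z
    have h1 : ∑ k ∈ Finset.range (M+1+1), a k * z ^ k
        = a 0 + z * ∑ k ∈ Finset.range (M+1), a (k+1) * z ^ k := by
      rw [Finset.sum_range_succ', Finset.mul_sum]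
      simp only [pow_zero, mul_one]
      rw [add_comm]
      congr 1
      exact Finset.sum_congr rfl fun k _ => by ring
    have h2 : ∑ k ∈ Finset.range (M+1), b k * z ^ k
        = b 0 + z * ∑ k ∈ Finset.range M, b (k+1) * z ^ k := by
      rw [Finset.sum_range_succ', Finset.mul_sum]
      simp only [pow_zero, mul_one]
      rw [add_comm]
      congr 1
      exact Finset.sum_congr rfl fun k _ => by ring
    have hI := ih (fun k => a (k+1)) (fun k => b (k+1))
      (fun k hk => hr (k+1) (by omega)) ha hb z
    have h0 := hr 0 (by omega)
    rw [h1, h2]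
    have hz : z ^ (M+1) = z * z ^ M := by ring
    rw [hz]
    linear_combination z * hI + z * h0

lemma scalar_identity (P Qi Sx Sy Qx Qy x y Ai : ℝ)
    (hAx : x + Ai ≠ 0) (hAy : y + Ai ≠ 0) (hd : x - y ≠ 0)
    (hs : (x + Ai) * Sx + Qi * Qx = (y + Ai) * Sy + Qi * Qy) :
    2 * P / (x + Ai) * (-2 * Sy) - -2 * Sx * (2 * P / (y + Ai))
      = 4 * ((Qx - Qy) / (x - y)) * (P * Qi / (x + Ai) - P * Qi / (y + Ai)) := by
  have hz : (x + Ai) * Sx + Qi * Qx - ((y + Ai) * Sy + Qi * Qy) = 0 := by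
    rw [hs]; ring
  rw [← sub_eq_zero]
  have hrepr : 2 * P / (x + Ai) * (-2 * Sy) - -2 * Sx * (2 * P / (y + Ai))
      - 4 * ((Qx - Qy) / (x - y)) * (P * Qi / (x + Ai) - P * Qi / (y + Ai))
      = (4 * P) * ((x + Ai) * Sx + Qi * Qx - ((y + Ai) * Sy + Qi * Qy))
        / ((x + Ai) * (y + Ai)) := by
    field_simp
    ring
  rw [hrepr, hz]
  simp

/-- {W_N(x), W_N(y)} = 4α_N(x,y)(V(x) − V(y)). -/
theorem WW_bracket
    (n : ℕ) (hn : 1 ≤ n) (A : Fin n → ℝ) (hA : Function.Injective A) (B : ℝ)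
    (N : ℕ) (hN : 3 ≤ N) (𝒰 : ℕ → (Fin (n+1) → ℝ) → ℝ)
    (hrec : Recur n (N-1) A B 𝒰) :
    ∀ x y : ℝ, x ≠ y → (∀ i : Fin n, x ≠ -A i) → (∀ i : Fin n, y ≠ -A i) →
    ∀ pt : Phase (n+1),
      poisson (Wfun n N A 𝒰 x) (Wfun n N A 𝒰 y) pt
        = 4 * alphaFun n N 𝒰 x y pt * (Vfun n A x pt - Vfun n A y pt) := by
  intro x y hxy hx hy pt
  obtain ⟨hsm0, hU0, hU1, hU2, hrr⟩ := hrec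
  have hsm : ∀ k ∈ Finset.range (N-1), ContDiff ℝ (⊤ : ℕ∞) (𝒰 (N-k-1)) := by
    intro k hk
    exact hsm0 _ (by omega)
  have hstar : ∀ i : Fin n,
      (x + A i) * (∑ k ∈ Finset.range (N-1), pdq' (𝒰 (N-k-1)) i.castSucc pt.1 * x ^ k)
        + pt.1 i.castSucc * Qfun n N 𝒰 x pt
      = (y + A i) * (∑ k ∈ Finset.range (N-1), pdq' (𝒰 (N-k-1)) i.castSucc pt.1 * y ^ k)
        + pt.1 i.castSucc * Qfun n N 𝒰 y pt := by
    intro i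
    have hr' : ∀ k < N-2,
        pdq' (𝒰 (N-k-1)) i.castSucc pt.1
          + A i * pdq' (𝒰 (N-(k+1)-1)) i.castSucc pt.1
        = (1/2) * pt.1 i.castSucc * pdq' (𝒰 (N-(k+1)-1)) (Fin.last n) pt.1 := by
      intro k hk
      obtain ⟨h1, -⟩ := hrr (N-k-1) (by omega) (by omega) pt.1
      have e : N - k - 1 - 1 = N - (k+1) - 1 := by omega
      rw [e] at h1
      linear_combination h1 i
    have ha : pdq' (𝒰 (N-(N-2)-1)) i.castSucc pt.1 = 0 := by
      have e : N - (N-2) - 1 = 1 := by omega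
      rw [e]
      exact pdq'_U1_cast n B 𝒰 hU1 i pt.1
    have hb : pdq' (𝒰 (N-(N-2)-1)) (Fin.last n) pt.1 = -2 := by
      have e : N - (N-2) - 1 = 1 := by omega
      rw [e]
      exact pdq'_U1_last n B 𝒰 hU1 pt.1
    have h := key_poly (A i) (pt.1 i.castSucc) (N-2)
      (fun k => pdq' (𝒰 (N-k-1)) i.castSucc pt.1)
      (fun k => pdq' (𝒰 (N-k-1)) (Fin.last n) pt.1)
      hr' ha hb
    have hxk := h x
    have hyk := h y
    have e : N - 2 + 1 = N - 1 := by omega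
    rw [e] at hxk hyk
    simp only [Qfun]
    linear_combination hxk - hyk
  -- compute the Poisson bracket
  simp only [poisson]
  rw [Fin.sum_univ_castSucc]
  simp only [pdp_Wfun_last, pdq_Wfun n N A 𝒰 hsm, pdp_Wfun_cast,
    zero_mul, mul_zero, sub_zero, add_zero]
  have hV : Vfun n A x pt - Vfun n A y pt
      = ∑ i : Fin n, (pt.2 i.castSucc * pt.1 i.castSucc / (x + A i)
        - pt.2 i.castSucc * pt.1 i.castSucc / (y + A i)) := by
    simp only [Vfun]
    rw [Finset.sum_sub_distrib]
    ring
  rw [hV, alphaFun, Finset.mul_sum]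
  apply Finset.sum_congr rfl
  intro i _
  have hAx : x + A i ≠ 0 := fun h => hx i (by linarith)
  have hAy : y + A i ≠ 0 := fun h => hy i (by linarith)
  have hxy' : x - y ≠ 0 := sub_ne_zero.mpr hxy
  exact scalar_identity _ _ _ _ _ _ _ _ _ hAx hAy hxy' (hstar i)
end
end
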